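/- arXiv:1401.1649 — 2 statements merged into one kernel-verified Lean document; each statement's English description precedes it below -/
import Mathlib

section
/- Let m ≥ 1 be an integer and 0 < α ≤ 1. For all integers 1 ≤ k' ≤ k one has Λ_m^α(k') ≤ (k/k') · Λ_m^α(k), and consequently Ξ_m^α(k') ≤ (k/k')^{mα+1} · Ξ_m^α(k). -/
open scoped ENNReal
open scoped Classical

noncomputable section

/-- Points of `ℝ^m` with the Euclidean norm. -/
abbrev Pt (m : ℕ) : Type := EuclideanSpace ℝ (Fin m)

/-- A finite weighted directed graph in `ℝ^m`: a finite vertex set, a finite set of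
directed segments `e = (e⁻, e⁺)`, and a multiplicity function. -/
structure BrGraph (m : ℕ) where
  V : Finset (Pt m)
  E : Finset (Pt m × Pt m)
  d : Pt m × Pt m → ℕ

/-- `G` is a weighted directed graph connecting the finite set `A` to the boundary of `Ω`:
`A ⊆ V(G) ⊆ cl Ω`; edges have distinct endpoints in `V(G)`; no edge appears with both
orientations; multiplicities are `≥ 1`; and the Kirchhoff balance law holds at every
vertex not on `∂Ω`. -/
def BrGraph.IsConn {m : ℕ} (G : BrGraph m) (A : Finset (Pt m)) (Ω : Set (Pt m)) : Prop :=
  A ⊆ G.V ∧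
  (G.V : Set (Pt m)) ⊆ closure Ω ∧
  (∀ e ∈ G.E, e.1 ∈ G.V ∧ e.2 ∈ G.V ∧ e.1 ≠ e.2) ∧
  (∀ e ∈ G.E, (e.2, e.1) ∉ G.E) ∧
  (∀ e ∈ G.E, 1 ≤ G.d e) ∧
  ∀ a ∈ G.V, a ∉ frontier Ω →
    (∑ e ∈ G.E.filter (fun e => e.1 = a), G.d e) =
      (∑ e ∈ G.E.filter (fun e => e.2 = a), G.d e) + (if a ∈ A then 1 else 0)

/-- The cost `W_α(G) = ∑_{e ∈ E(G)} d(e)^α · ℓ(e)` where `ℓ(e) = |e⁺ − e⁻|`. -/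
def BrGraph.cost {m : ℕ} (α : ℝ) (G : BrGraph m) : ℝ :=
  ∑ e ∈ G.E, (G.d e : ℝ) ^ α * ‖e.2 - e.1‖

/-- The branched connection `ℒ^α_brbd(A, ∂Ω) = inf { W_α(G) : G ∈ 𝒢(A, ∂Ω) }`
(valued in `[0, ∞]`, equal to `∞` if no connecting graph exists). -/
def Lbrbd (m : ℕ) (α : ℝ) (A : Finset (Pt m)) (Ω : Set (Pt m)) : ℝ≥0∞ :=
  ⨅ (G : BrGraph m) (_ : G.IsConn A Ω), ENNReal.ofReal (G.cost α)

/-- The open unit cube `(0,1)^m ⊆ ℝ^m`. -/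
def unitCube (m : ℕ) : Set (Pt m) := {x | ∀ j, x j ∈ Set.Ioo (0 : ℝ) 1}

/-- The uniform grid `A_m^k = { (i₁/k, …, i_m/k) : i₁, …, i_m ∈ {1, …, k} }` of `k^m`
points. -/
def gridA (m k : ℕ) : Finset (Pt m) :=
  (Fintype.piFinset fun _ : Fin m => Finset.Icc 1 k).image
    fun I => (WithLp.equiv 2 (Fin m → ℝ)).symm fun j => (I j : ℝ) / k

/-- `Λ_m^α(k) = ℒ^α_brbd(A_m^k, ∂(0,1)^m)`. -/
def LamGrid (m : ℕ) (α : ℝ) (k : ℕ) : ℝ≥0∞ := Lbrbd m α (gridA m k) (unitCube m)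

/-- `Ξ_m^α(k) = k^{−mα} · Λ_m^α(k)`. -/
def XiGrid (m : ℕ) (α : ℝ) (k : ℕ) : ℝ≥0∞ :=
  ENNReal.ofReal ((k : ℝ) ^ (-((m : ℝ) * α))) * LamGrid m α k

/-!
Push a graph connecting `A_m^k` to `∂(0,1)^m` forward along `Φ x = (min (λ xⱼ) 1)ⱼ`,
`λ = k/k'`. The map `Φ` is `λ`-Lipschitz and preserves the closed cube. Over the open cube it is
the dilation by `λ`: there every point has at most one preimage vertex, that vertex is interior,
and it lies in `A_m^k` exactly when its image lies in `A_m^{k'}`; so Kirchhoff's law is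
inherited, while the points of `A_m^k` with a coordinate above `k'/k` land on the boundary.
Merging parallel image edges and cancelling opposite ones can only lower the cost because
`d ↦ d^α` is subadditive for `α ≤ 1`, so the image graph costs at most `λ` times as much.
The bound for `Ξ` is the same inequality multiplied by `k'^{-mα}`.
-/

theorem natCast_sum_rpow_le {ι : Type*} {α : ℝ} (hα0 : 0 < α) (hα1 : α ≤ 1)
    (s : Finset ι) (n : ι → ℕ) :
    ((∑ i ∈ s, n i : ℕ) : ℝ) ^ α ≤ ∑ i ∈ s, (n i : ℝ) ^ α :=
  Finset.le_sum_of_subadditive (fun x : ℕ => (x : ℝ) ^ α)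
    (by simp [Real.zero_rpow hα0.ne'])
    (fun x y => by
      push_cast
      exact Real.rpow_add_le_add_rpow x.cast_nonneg y.cast_nonneg hα0.le hα1) s n

namespace BrGraph

variable {m : ℕ} (G : BrGraph m) (Φ : Pt m → Pt m)

def flow (p : Pt m × Pt m) : ℕ := ∑ e ∈ G.E with Prod.map Φ Φ e = p, G.d e

/-- Parallel image edges are merged, opposite ones cancel and collapsed edges disappear: only
the net flow between two image vertices survives. -/
def pushforward : BrGraph m where
  V := G.V.image Φ
  E := {p ∈ G.V.image Φ ×ˢ G.V.image Φ | G.flow Φ p.swap < G.flow Φ p}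
  d p := G.flow Φ p - G.flow Φ p.swap

lemma mem_pushforward_E {p : Pt m × Pt m} :
    p ∈ (G.pushforward Φ).E ↔
      p.1 ∈ G.V.image Φ ∧ p.2 ∈ G.V.image Φ ∧ G.flow Φ p.swap < G.flow Φ p := by
  simp [pushforward, and_assoc]

lemma pushforward_d_sub_d_swap (p : Pt m × Pt m) :
    ((G.pushforward Φ).d p : ℤ) - (G.pushforward Φ).d p.swap = G.flow Φ p - G.flow Φ p.swap := by
  simp only [pushforward, Prod.swap_swap]
  omega

lemma sum_pushforward_d_filter (q : Pt m × Pt m → Prop) [DecidablePred q] :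
    ∑ p ∈ (G.pushforward Φ).E with q p, (G.pushforward Φ).d p =
      ∑ p ∈ G.V.image Φ ×ˢ G.V.image Φ with q p, (G.pushforward Φ).d p := by
  rw [pushforward, Finset.filter_comm]
  exact Finset.sum_filter_of_ne fun p _ hp => Nat.sub_ne_zero_iff_lt.1 hp

lemma sum_flow_filter (hE : ∀ e ∈ G.E, e.1 ∈ G.V ∧ e.2 ∈ G.V)
    (q : Pt m × Pt m → Prop) [DecidablePred q] :
    ∑ p ∈ G.V.image Φ ×ˢ G.V.image Φ with q p, G.flow Φ p =
      ∑ e ∈ G.E with q (Prod.map Φ Φ e), G.d e := by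
  simp only [flow]
  rw [Finset.sum_fiberwise_eq_sum_filter]
  refine Finset.sum_congr (Finset.filter_congr fun e he => ?_) fun _ _ => rfl
  have := hE e he
  simp [Finset.mem_image_of_mem Φ this.1, Finset.mem_image_of_mem Φ this.2]

theorem pushforward_netOutflow (hE : ∀ e ∈ G.E, e.1 ∈ G.V ∧ e.2 ∈ G.V) (a : Pt m) :
    ((∑ p ∈ (G.pushforward Φ).E with p.1 = a, (G.pushforward Φ).d p : ℕ) : ℤ) -
        (∑ p ∈ (G.pushforward Φ).E with p.2 = a, (G.pushforward Φ).d p : ℕ) =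
      (∑ e ∈ G.E with Φ e.1 = a, G.d e : ℕ) - (∑ e ∈ G.E with Φ e.2 = a, G.d e : ℕ) := by
  set V' := G.V.image Φ
  have hswap : ∀ f : Pt m × Pt m → ℤ,
      ∑ p ∈ V' ×ˢ V' with p.2 = a, f p = ∑ p ∈ V' ×ˢ V' with p.1 = a, f p.swap :=
    fun f => Finset.sum_nbij' Prod.swap Prod.swap (by aesop) (by aesop) (by simp) (by simp)
      (by simp)
  have hout := G.sum_flow_filter Φ hE (·.1 = a)
  have hin := G.sum_flow_filter Φ hE (·.2 = a)
  simp only [Prod.map_fst, Prod.map_snd] at hout hin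
  rw [sum_pushforward_d_filter, sum_pushforward_d_filter, ← hout, ← hin]
  push_cast
  rw [hswap, hswap, ← Finset.sum_sub_distrib, ← Finset.sum_sub_distrib]
  exact Finset.sum_congr rfl fun p _ => G.pushforward_d_sub_d_swap Φ p

lemma pushforward_d_rpow_le {α : ℝ} (hα0 : 0 < α) (hα1 : α ≤ 1) (p : Pt m × Pt m) :
    ((G.pushforward Φ).d p : ℝ) ^ α ≤ ∑ e ∈ G.E with Prod.map Φ Φ e = p, (G.d e : ℝ) ^ α :=
  calc ((G.pushforward Φ).d p : ℝ) ^ α ≤ (G.flow Φ p : ℝ) ^ α :=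
        Real.rpow_le_rpow (by positivity) (by exact_mod_cast Nat.sub_le _ _) hα0.le
    _ ≤ _ := natCast_sum_rpow_le hα0 hα1 _ _

theorem cost_pushforward_le {α L : ℝ} (hα0 : 0 < α) (hα1 : α ≤ 1)
    (hΦ : ∀ e ∈ G.E, ‖Φ e.2 - Φ e.1‖ ≤ L * ‖e.2 - e.1‖) :
    (G.pushforward Φ).cost α ≤ L * G.cost α := by
  set E' := (G.pushforward Φ).E
  calc (G.pushforward Φ).cost α
      ≤ ∑ p ∈ E', ∑ e ∈ G.E with Prod.map Φ Φ e = p, (G.d e : ℝ) ^ α * ‖p.2 - p.1‖ := by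
        refine Finset.sum_le_sum fun p _ => ?_
        rw [← Finset.sum_mul]
        exact mul_le_mul_of_nonneg_right (G.pushforward_d_rpow_le Φ hα0 hα1 p) (norm_nonneg _)
    _ = ∑ p ∈ E', ∑ e ∈ G.E with Prod.map Φ Φ e = p, (G.d e : ℝ) ^ α * ‖Φ e.2 - Φ e.1‖ :=
        Finset.sum_congr rfl fun p _ => Finset.sum_congr rfl fun e he => by
          rw [← (Finset.mem_filter.1 he).2, Prod.map_fst, Prod.map_snd]
    _ = ∑ e ∈ G.E with Prod.map Φ Φ e ∈ E', (G.d e : ℝ) ^ α * ‖Φ e.2 - Φ e.1‖ :=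
        Finset.sum_fiberwise_eq_sum_filter _ _ _ _
    _ ≤ ∑ e ∈ G.E, (G.d e : ℝ) ^ α * ‖Φ e.2 - Φ e.1‖ :=
        Finset.sum_le_sum_of_subset_of_nonneg (Finset.filter_subset _ _)
          fun _ _ _ => by positivity
    _ ≤ ∑ e ∈ G.E, (G.d e : ℝ) ^ α * (L * ‖e.2 - e.1‖) :=
        Finset.sum_le_sum fun e he => mul_le_mul_of_nonneg_left (hΦ e he) (by positivity)
    _ = L * G.cost α := by
        rw [cost, Finset.mul_sum]
        exact Finset.sum_congr rfl fun _ _ => by ring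

variable {G Φ} in
theorem IsConn.pushforward {A A' : Finset (Pt m)} {Ω Ω' : Set (Pt m)} (hG : G.IsConn A Ω)
    (hV : ∀ v ∈ G.V, Φ v ∈ closure Ω') (hA : A' ⊆ A.image Φ)
    (hinj : ∀ v ∈ G.V, Φ v ∉ frontier Ω' →
      v ∉ frontier Ω ∧ (Φ v ∈ A' ↔ v ∈ A) ∧ ∀ w ∈ G.V, Φ w = Φ v → w = v) :
    (G.pushforward Φ).IsConn A' Ω' := by
  obtain ⟨hAV, -, hE, -, -, hKir⟩ := hG
  refine ⟨hA.trans (Finset.image_subset_image hAV), ?_, fun p hp => ?_, fun p hp hp' => ?_,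
    fun p hp => ?_, fun a ha haΩ => ?_⟩
  · intro x hx
    obtain ⟨v, hv, rfl⟩ := Finset.mem_image.1 hx
    exact hV v hv
  · obtain ⟨h1, h2, hlt⟩ := (G.mem_pushforward_E Φ).1 hp
    exact ⟨h1, h2, fun h => (Prod.ext h.symm h : p.swap = p) ▸ hlt |>.false⟩
  · exact lt_asymm ((G.mem_pushforward_E Φ).1 hp).2.2 ((G.mem_pushforward_E Φ).1 hp').2.2
  · exact Nat.sub_pos_of_lt ((G.mem_pushforward_E Φ).1 hp).2.2
  · obtain ⟨v, hv, rfl⟩ := Finset.mem_image.1 ha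
    obtain ⟨hvΩ, hvA, hfib⟩ := hinj v hv haΩ
    have hfibre : ∀ w ∈ G.V, Φ w = Φ v ↔ w = v := fun w hw => ⟨hfib w hw, fun h => h ▸ rfl⟩
    have hnet := G.pushforward_netOutflow Φ (fun e he => ⟨(hE e he).1, (hE e he).2.1⟩) (Φ v)
    rw [Finset.filter_congr fun e he => hfibre e.1 (hE e he).1,
      Finset.filter_congr fun e he => hfibre e.2 (hE e he).2.1] at hnet
    have := hKir v hv hvΩ
    simp only [hvA] at this ⊢
    split_ifs at this ⊢ <;> omega

end BrGraph

lemma EuclideanSpace.norm_le_norm_of_forall_abs_le {ι : Type*} [Fintype ι]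
    {x y : EuclideanSpace ℝ ι} (h : ∀ i, |x i| ≤ |y i|) : ‖x‖ ≤ ‖y‖ := by
  rw [EuclideanSpace.norm_eq, EuclideanSpace.norm_eq]
  gcongr with i
  simpa only [Real.norm_eq_abs] using h i

lemma unitCube_eq_preimage (m : ℕ) :
    unitCube m = PiLp.homeomorph 2 (fun _ : Fin m => ℝ) ⁻¹' Set.univ.pi fun _ => Set.Ioo 0 1 := by
  ext x
  simp [unitCube, PiLp.homeomorph]

lemma isOpen_unitCube (m : ℕ) : IsOpen (unitCube m) := by
  rw [unitCube_eq_preimage]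
  exact (isOpen_set_pi Set.finite_univ fun _ _ => isOpen_Ioo).preimage (Homeomorph.continuous _)

lemma closure_unitCube (m : ℕ) :
    closure (unitCube m) = {x : Pt m | ∀ j, x j ∈ Set.Icc (0 : ℝ) 1} := by
  rw [unitCube_eq_preimage, ← Homeomorph.preimage_closure, closure_pi_set]
  ext x
  simp [PiLp.homeomorph, closure_Ioo zero_ne_one, Pi.le_def, forall_and]

lemma mem_unitCube_of_mem_closure_of_notMem_frontier {m : ℕ} {x : Pt m}
    (hx : x ∈ closure (unitCube m)) (hx' : x ∉ frontier (unitCube m)) : x ∈ unitCube m := by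
  by_contra h
  exact hx' ((isOpen_unitCube m).frontier_eq ▸ ⟨hx, h⟩)

lemma notMem_frontier_unitCube {m : ℕ} {x : Pt m} (hx : x ∈ unitCube m) :
    x ∉ frontier (unitCube m) :=
  fun h => ((isOpen_unitCube m).frontier_eq ▸ h).2 hx

lemma mem_gridA_iff {m k : ℕ} {x : Pt m} :
    x ∈ gridA m k ↔ ∀ j, ∃ i ∈ Finset.Icc 1 k, x j = (i : ℝ) / k := by
  simp only [gridA, Finset.mem_image, Fintype.mem_piFinset]
  constructor
  · rintro ⟨I, hI, rfl⟩ j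
    exact ⟨I j, hI j, rfl⟩
  · intro h
    choose I hI hx using h
    exact ⟨I, hI, PiLp.ext fun j => (hx j).symm⟩

lemma exists_div_eq_mul_iff {k k' : ℕ} (hk' : 1 ≤ k') (hkk : k' ≤ k) {t : ℝ}
    (ht : (k : ℝ) / k' * t < 1) :
    (∃ i ∈ Finset.Icc 1 k', (k : ℝ) / k' * t = (i : ℝ) / k') ↔
      ∃ i ∈ Finset.Icc 1 k, t = (i : ℝ) / k := by
  have hk'0 : (0 : ℝ) < k' := by exact_mod_cast hk'
  have hk0 : (0 : ℝ) < k := hk'0.trans_le (by exact_mod_cast hkk)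
  have hiff : ∀ i : ℕ, (k : ℝ) / k' * t = i / k' ↔ t = i / k := fun i => by
    rw [div_mul_eq_mul_div, div_left_inj' hk'0.ne', eq_div_iff hk0.ne', mul_comm]
  simp only [hiff, Finset.mem_Icc]
  constructor
  · rintro ⟨i, ⟨hi1, hik'⟩, hti⟩
    exact ⟨i, ⟨hi1, hik'.trans hkk⟩, hti⟩
  · rintro ⟨i, ⟨hi1, -⟩, rfl⟩
    refine ⟨i, ⟨hi1, ?_⟩, rfl⟩
    have : (i : ℝ) < k' := by
      rwa [div_mul_div_comm, mul_comm (k : ℝ), ← div_mul_div_comm, div_self hk0.ne', mul_one,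
        div_lt_one hk'0] at ht
    exact_mod_cast this.le

def clipMap (m : ℕ) (c : ℝ) (x : Pt m) : Pt m := WithLp.toLp 2 fun j => min (c * x j) 1

section clipMap

variable {m : ℕ} {c : ℝ}

lemma clipMap_apply (x : Pt m) (j : Fin m) : clipMap m c x j = min (c * x j) 1 := rfl

lemma norm_clipMap_sub_le (hc : 0 ≤ c) (x y : Pt m) :
    ‖clipMap m c y - clipMap m c x‖ ≤ c * ‖y - x‖ :=
  calc ‖clipMap m c y - clipMap m c x‖ ≤ ‖c • (y - x)‖ :=
        EuclideanSpace.norm_le_norm_of_forall_abs_le fun j => by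
          simpa [clipMap_apply, mul_sub] using abs_min_sub_min_le_max (c * y j) 1 (c * x j) 1
    _ = c * ‖y - x‖ := by rw [norm_smul, Real.norm_of_nonneg hc]

lemma clipMap_mem_closure_unitCube (hc : 0 ≤ c) {x : Pt m} (hx : x ∈ closure (unitCube m)) :
    clipMap m c x ∈ closure (unitCube m) := by
  rw [closure_unitCube] at hx ⊢
  exact fun j => ⟨le_min (mul_nonneg hc (hx j).1) zero_le_one, min_le_right _ _⟩

lemma clipMap_eq_smul {x : Pt m} (hx : clipMap m c x ∈ unitCube m) : clipMap m c x = c • x :=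
  PiLp.ext fun j => min_eq_left ((min_lt_iff.1 (hx j).2).resolve_right (lt_irrefl 1)).le

lemma mem_unitCube_of_clipMap_mem (hc : 1 ≤ c) {x : Pt m} (hx : clipMap m c x ∈ unitCube m) :
    x ∈ unitCube m := by
  rw [clipMap_eq_smul hx] at hx
  intro j
  obtain ⟨hpos, hlt⟩ := hx j
  simp only [PiLp.smul_apply, smul_eq_mul] at hpos hlt
  have hxj : 0 < x j := pos_of_mul_pos_right hpos (by linarith)
  exact ⟨hxj, (le_mul_of_one_le_left hxj.le hc).trans_lt hlt⟩

variable {k k' : ℕ}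

lemma gridA_subset_image_clipMap (hk' : 1 ≤ k') (hkk : k' ≤ k) :
    gridA m k' ⊆ (gridA m k).image (clipMap m (k / k')) := by
  have hk'0 : (0 : ℝ) < k' := by exact_mod_cast hk'
  have hk0 : (0 : ℝ) < k := hk'0.trans_le (by exact_mod_cast hkk)
  intro a ha
  choose I hI ha using mem_gridA_iff.1 ha
  refine Finset.mem_image.2 ⟨WithLp.toLp 2 fun j => (I j : ℝ) / k,
    mem_gridA_iff.2 fun j => ⟨I j, Finset.Icc_subset_Icc_right hkk (hI j), rfl⟩,
    PiLp.ext fun j => ?_⟩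
  have hIj : (I j : ℝ) ≤ k' := by exact_mod_cast (Finset.mem_Icc.1 (hI j)).2
  rw [clipMap_apply, ha j, PiLp.toLp_apply, div_mul_div_cancel₀' hk0.ne',
    min_eq_left ((div_le_one hk'0).2 hIj)]

lemma clipMap_mem_gridA_iff (hk' : 1 ≤ k') (hkk : k' ≤ k) {x : Pt m}
    (hx : clipMap m (k / k') x ∈ unitCube m) :
    clipMap m (k / k') x ∈ gridA m k' ↔ x ∈ gridA m k := by
  rw [mem_gridA_iff, mem_gridA_iff, clipMap_eq_smul hx]
  refine forall_congr' fun j => ?_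
  simpa using exists_div_eq_mul_iff hk' hkk (by simpa [clipMap_eq_smul hx] using (hx j).2)

end clipMap

theorem BrGraph.IsConn.pushforward_clipMap {m k k' : ℕ} (hk' : 1 ≤ k') (hkk : k' ≤ k)
    {G : BrGraph m} (hG : G.IsConn (gridA m k) (unitCube m)) :
    (G.pushforward (clipMap m (k / k'))).IsConn (gridA m k') (unitCube m) := by
  have hc : (1 : ℝ) ≤ k / k' :=
    (one_le_div (by exact_mod_cast hk')).2 (by exact_mod_cast hkk)
  have hV : ∀ v ∈ G.V, v ∈ closure (unitCube m) := fun v hv => hG.2.1 hv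
  refine hG.pushforward (fun v hv => clipMap_mem_closure_unitCube (by positivity) (hV v hv))
    (gridA_subset_image_clipMap hk' hkk) fun v hv hfr => ?_
  have hcube := mem_unitCube_of_mem_closure_of_notMem_frontier
    (clipMap_mem_closure_unitCube (by positivity) (hV v hv)) hfr
  refine ⟨notMem_frontier_unitCube (mem_unitCube_of_clipMap_mem hc hcube),
    clipMap_mem_gridA_iff hk' hkk hcube, fun w _ hw => ?_⟩
  have hcube' : clipMap m (k / k') w ∈ unitCube m := hw ▸ hcube
  refine smul_right_injective (Pt m) (r := (k : ℝ) / k') (by positivity) ?_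
  dsimp only
  rw [← clipMap_eq_smul hcube', ← clipMap_eq_smul hcube, hw]

theorem Lbrbd_le_ofReal_mul {m : ℕ} {α c : ℝ} (hc : 0 < c) {A A' : Finset (Pt m)}
    {Ω Ω' : Set (Pt m)}
    (h : ∀ G : BrGraph m, G.IsConn A Ω →
      ∃ G' : BrGraph m, G'.IsConn A' Ω' ∧ G'.cost α ≤ c * G.cost α) :
    Lbrbd m α A' Ω' ≤ ENNReal.ofReal c * Lbrbd m α A Ω := by
  have hc0 : ENNReal.ofReal c ≠ 0 := ENNReal.ofReal_pos.2 hc |>.ne'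
  simp only [Lbrbd, ENNReal.mul_iInf_of_ne hc0 ENNReal.ofReal_ne_top]
  refine le_iInf₂ fun G hG => ?_
  obtain ⟨G', hG', hcost⟩ := h G hG
  calc ⨅ (G : BrGraph m) (_ : G.IsConn A' Ω'), ENNReal.ofReal (G.cost α)
      ≤ ENNReal.ofReal (G'.cost α) := iInf₂_le G' hG'
    _ ≤ ENNReal.ofReal (c * G.cost α) := ENNReal.ofReal_le_ofReal hcost
    _ = ENNReal.ofReal c * ENNReal.ofReal (G.cost α) := ENNReal.ofReal_mul hc.le

theorem lamGrid_le_mul (m : ℕ) {α : ℝ} (hα0 : 0 < α) (hα1 : α ≤ 1) {k k' : ℕ} (hk' : 1 ≤ k')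
    (hkk : k' ≤ k) :
    LamGrid m α k' ≤ ENNReal.ofReal ((k : ℝ) / k') * LamGrid m α k := by
  have hk'0 : (0 : ℝ) < k' := by exact_mod_cast hk'
  have hc : (0 : ℝ) < k / k' := div_pos (hk'0.trans_le (by exact_mod_cast hkk)) hk'0
  refine Lbrbd_le_ofReal_mul hc fun G hG => ⟨_, hG.pushforward_clipMap hk' hkk,
    G.cost_pushforward_le _ hα0 hα1 fun e _ => norm_clipMap_sub_le hc.le e.1 e.2⟩

theorem xiGrid_le_of_lamGrid_le {m k k' : ℕ} {α : ℝ} (hk' : 0 < k') (hk : 0 < k)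
    (h : LamGrid m α k' ≤ ENNReal.ofReal ((k : ℝ) / k') * LamGrid m α k) :
    XiGrid m α k' ≤ ENNReal.ofReal (((k : ℝ) / k') ^ ((m : ℝ) * α + 1)) * XiGrid m α k := by
  have hk'0 : (0 : ℝ) < k' := by exact_mod_cast hk'
  have hk0 : (0 : ℝ) < k := by exact_mod_cast hk
  have hexp : (k' : ℝ) ^ (-((m : ℝ) * α)) * (k / k') =
      ((k : ℝ) / k') ^ ((m : ℝ) * α + 1) * (k : ℝ) ^ (-((m : ℝ) * α)) := by
    rw [Real.rpow_add (div_pos hk0 hk'0), Real.rpow_one, Real.div_rpow hk0.le hk'0.le,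
      Real.rpow_neg hk0.le, Real.rpow_neg hk'0.le]
    field_simp
  calc XiGrid m α k'
      ≤ ENNReal.ofReal ((k' : ℝ) ^ (-((m : ℝ) * α))) *
          (ENNReal.ofReal ((k : ℝ) / k') * LamGrid m α k) := mul_le_mul_right h _
    _ = ENNReal.ofReal (((k : ℝ) / k') ^ ((m : ℝ) * α + 1)) * XiGrid m α k := by
        rw [XiGrid, ← mul_assoc, ← ENNReal.ofReal_mul (by positivity), hexp,
          ENNReal.ofReal_mul (by positivity), mul_assoc]

theorem statement14_general (m : ℕ) (α : ℝ) (hα0 : 0 < α) (hα1 : α ≤ 1)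
    (k k' : ℕ) (hk' : 1 ≤ k') (hkk : k' ≤ k) :
    LamGrid m α k' ≤ ENNReal.ofReal ((k : ℝ) / (k' : ℝ)) * LamGrid m α k ∧
    XiGrid m α k' ≤
      ENNReal.ofReal (((k : ℝ) / (k' : ℝ)) ^ ((m : ℝ) * α + 1)) * XiGrid m α k := by
  have hLam := lamGrid_le_mul m hα0 hα1 hk' hkk
  exact ⟨hLam, xiGrid_le_of_lamGrid_le hk' (hk'.trans hkk) hLam⟩

/-- For `m ≥ 1`, `0 < α ≤ 1` and integers `1 ≤ k' ≤ k` one has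
`Λ_m^α(k') ≤ (k/k')·Λ_m^α(k)` and hence `Ξ_m^α(k') ≤ (k/k')^{mα+1}·Ξ_m^α(k)`. -/
theorem statement14 (m : ℕ) (hm : 1 ≤ m) (α : ℝ) (hα0 : 0 < α) (hα1 : α ≤ 1)
    (k k' : ℕ) (hk' : 1 ≤ k') (hkk : k' ≤ k) :
    LamGrid m α k' ≤ ENNReal.ofReal ((k : ℝ) / (k' : ℝ)) * LamGrid m α k ∧
    XiGrid m α k' ≤
      ENNReal.ofReal (((k : ℝ) / (k' : ℝ)) ^ ((m : ℝ) * α + 1)) * XiGrid m α k :=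
  statement14_general m α hα0 hα1 k k' hk' hkk

end
end

section
/- Let Ω ⊆ ℝ^m be an open set, let P and Q be disjoint finite subsets of Ω, and let (Ω_p)_{p∈𝔓} be a finite family of pairwise disjoint open convex subsets of Ω such that Q ∩ cl(Ω_p) = ∅ and P ∩ ∂Ω_p = ∅ for every p. Then ℒ^α_brbd(P, Q, Ω) ≥ Σ_{p∈𝔓} ℒ^α_brbd(P ∩ Ω_p, ∂Ω_p). -/
open scoped ENNReal
open scoped Classical

noncomputable section

/-- `G` is a weighted directed graph connecting the positive charges `P` to the negative
charges `Q` in `Ω`: the balance law at an interior vertex `a` has source `+1` if `a ∈ P`,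
`−1` if `a ∈ Q`, and `0` otherwise. -/
def BrGraph.IsConnPQ {m : ℕ} (G : BrGraph m) (P Q : Finset (Pt m)) (Ω : Set (Pt m)) :
    Prop :=
  P ⊆ G.V ∧ Q ⊆ G.V ∧
  (G.V : Set (Pt m)) ⊆ closure Ω ∧
  (∀ e ∈ G.E, e.1 ∈ G.V ∧ e.2 ∈ G.V ∧ e.1 ≠ e.2) ∧
  (∀ e ∈ G.E, (e.2, e.1) ∉ G.E) ∧
  (∀ e ∈ G.E, 1 ≤ G.d e) ∧
  ∀ a ∈ G.V, a ∉ frontier Ω →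
    (∑ e ∈ G.E.filter (fun e => e.1 = a), (G.d e : ℤ)) =
      (∑ e ∈ G.E.filter (fun e => e.2 = a), (G.d e : ℤ)) +
      (if a ∈ P then 1 else if a ∈ Q then -1 else 0)

/-- `ℒ^α_brbd(P, Q, Ω) = inf { W_α(G) : G ∈ 𝒢(P, Q, Ω) } ∈ [0, ∞]`. -/
def LbrbdPQ (m : ℕ) (α : ℝ) (P Q : Finset (Pt m)) (Ω : Set (Pt m)) : ℝ≥0∞ :=
  ⨅ (G : BrGraph m) (_ : G.IsConnPQ P Q Ω), ENNReal.ofReal (G.cost α)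

/-! Fix `G ∈ 𝒢(P, Q, Ω)`. For each `p`, clip every edge of `G` with an endpoint in `Ω_p` to its
part between the first entry into and the last exit from `Ω_p`, and net opposite segments.
Clipped endpoints inside `Ω_p` are original vertices and `Q` misses `Ω_p`, so the balance law
survives and the result lies in `𝒢(P ∩ Ω_p, ∂Ω_p)`; by subadditivity of `t ↦ t^α` its cost is at
most `Σ_e d(e)^α ℓ_p(e)`, with `ℓ_p(e)` the length of the clipped part of `e`. By convexity the
open parameter interval of that part maps into `Ω_p`, so for distinct `p` these intervals are
disjoint and `Σ_p ℓ_p(e) ≤ ℓ(e)`. -/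

open scoped Topology
open MeasureTheory

theorem sum_sub_le_of_pairwiseDisjoint_Ioo {ι : Type*} {s : Finset ι} {a b : ι → ℝ}
    {c d : ℝ} (hcd : c ≤ d) (hab : ∀ i ∈ s, a i ≤ b i) (hbd : ∀ i ∈ s, c ≤ a i ∧ b i ≤ d)
    (hdisj : (s : Set ι).PairwiseDisjoint fun i => Set.Ioo (a i) (b i)) :
    ∑ i ∈ s, (b i - a i) ≤ d - c := by
  rw [← ENNReal.ofReal_le_ofReal_iff (sub_nonneg.2 hcd),
    ENNReal.ofReal_sum_of_nonneg fun i hi => sub_nonneg.2 (hab i hi)]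
  calc ∑ i ∈ s, ENNReal.ofReal (b i - a i) = volume (⋃ i ∈ s, Set.Ioo (a i) (b i)) := by
        rw [measure_biUnion_finset hdisj fun i _ => measurableSet_Ioo]
        simp only [Real.volume_Ioo]
    _ ≤ volume (Set.Icc c d) := by
        refine measure_mono (Set.iUnion₂_subset fun i hi => ?_)
        exact Set.Ioo_subset_Icc_self.trans (Set.Icc_subset_Icc (hbd i hi).1 (hbd i hi).2)
    _ = ENNReal.ofReal (d - c) := Real.volume_Icc

section Clip

variable {E : Type*} [NormedAddCommGroup E] [NormedSpace ℝ E] {U : Set E} {e : E × E}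

def segParams (U : Set E) (e : E × E) : Set ℝ :=
  Set.Icc 0 1 ∩ AffineMap.lineMap e.1 e.2 ⁻¹' U

def entryParam (U : Set E) (e : E × E) : ℝ := sInf (segParams U e)

def exitParam (U : Set E) (e : E × E) : ℝ := sSup (segParams U e)

/-- The segment `e` cut down to the part between its first entry into and last exit from `U`. -/
def clip (U : Set E) (e : E × E) : E × E :=
  (AffineMap.lineMap e.1 e.2 (entryParam U e), AffineMap.lineMap e.1 e.2 (exitParam U e))

lemma segParams_subset_Icc : segParams U e ⊆ Set.Icc 0 1 := Set.inter_subset_left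

lemma bddBelow_segParams : BddBelow (segParams U e) :=
  ⟨0, fun _ ht => (segParams_subset_Icc ht).1⟩

lemma bddAbove_segParams : BddAbove (segParams U e) :=
  ⟨1, fun _ ht => (segParams_subset_Icc ht).2⟩

lemma entryParam_nonneg : 0 ≤ entryParam U e :=
  Real.sInf_nonneg fun _ ht => (segParams_subset_Icc ht).1

lemma exitParam_le_one : exitParam U e ≤ 1 :=
  Real.sSup_le (fun _ ht => (segParams_subset_Icc ht).2) zero_le_one

lemma entryParam_le_exitParam : entryParam U e ≤ exitParam U e := by
  rcases (segParams U e).eq_empty_or_nonempty with h | h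
  · simp [entryParam, exitParam, h]
  · exact csInf_le_csSup h bddBelow_segParams bddAbove_segParams

lemma convex_segParams (hc : Convex ℝ U) : Convex ℝ (segParams U e) :=
  (convex_Icc 0 1).inter (hc.affine_preimage _)

lemma Ioo_entryParam_exitParam_subset (hc : Convex ℝ U) :
    Set.Ioo (entryParam U e) (exitParam U e) ⊆ segParams U e := by
  rcases (segParams U e).eq_empty_or_nonempty with h | h
  · simp [entryParam, exitParam, h]
  · exact IsConnected.Ioo_csInf_csSup_subset ⟨h, (convex_segParams hc).isPreconnected⟩
      bddBelow_segParams bddAbove_segParams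

lemma clip_mem_closure (he : e.1 ∈ U ∨ e.2 ∈ U) :
    (clip U e).1 ∈ closure U ∧ (clip U e).2 ∈ closure U := by
  have hne : (segParams U e).Nonempty := by
    rcases he with h | h
    · exact ⟨0, by simp [segParams, h]⟩
    · exact ⟨1, by simp [segParams, h]⟩
  have hcl : closure (segParams U e) ⊆ AffineMap.lineMap e.1 e.2 ⁻¹' closure U :=
    (closure_mono Set.inter_subset_right).trans
      (AffineMap.lineMap_continuous.closure_preimage_subset U)
  exact ⟨hcl (csInf_mem_closure hne bddBelow_segParams),
    hcl (csSup_mem_closure hne bddAbove_segParams)⟩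

lemma entryParam_eq_zero (h : e.1 ∈ U) : entryParam U e = 0 :=
  le_antisymm (csInf_le bddBelow_segParams (by simp [segParams, h])) entryParam_nonneg

lemma exitParam_eq_one (h : e.2 ∈ U) : exitParam U e = 1 :=
  le_antisymm exitParam_le_one (le_csSup bddAbove_segParams (by simp [segParams, h]))

/-- By openness, parameters slightly below a positive `entryParam` would still map into `U`. -/
lemma entryParam_eq_zero_of_mem (hU : IsOpen U) (h : (clip U e).1 ∈ U) :
    entryParam U e = 0 := by
  by_contra hne
  have hpos : 0 < entryParam U e := entryParam_nonneg.lt_of_ne' hne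
  have hin : ∀ᶠ t in 𝓝[<] entryParam U e, t ∈ segParams U e ∧ t < entryParam U e := by
    have hU' : ∀ᶠ t in 𝓝 (entryParam U e), AffineMap.lineMap e.1 e.2 t ∈ U :=
      AffineMap.lineMap_continuous.continuousAt.preimage_mem_nhds (hU.mem_nhds h)
    filter_upwards [nhdsWithin_le_nhds hU', nhdsWithin_le_nhds (Ioi_mem_nhds hpos),
      self_mem_nhdsWithin] with t htU ht0 ht
    exact ⟨⟨⟨ht0.out.le, (ht.out.le.trans entryParam_le_exitParam).trans exitParam_le_one⟩,
      htU⟩, ht⟩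
  obtain ⟨t, ht, hlt⟩ := hin.exists
  exact (csInf_le bddBelow_segParams ht).not_gt hlt

lemma exitParam_eq_one_of_mem (hU : IsOpen U) (h : (clip U e).2 ∈ U) :
    exitParam U e = 1 := by
  by_contra hne
  have hlt : exitParam U e < 1 := exitParam_le_one.lt_of_ne hne
  have hin : ∀ᶠ t in 𝓝[>] exitParam U e, t ∈ segParams U e ∧ exitParam U e < t := by
    have hU' : ∀ᶠ t in 𝓝 (exitParam U e), AffineMap.lineMap e.1 e.2 t ∈ U :=
      AffineMap.lineMap_continuous.continuousAt.preimage_mem_nhds (hU.mem_nhds h)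
    filter_upwards [nhdsWithin_le_nhds hU', nhdsWithin_le_nhds (Iio_mem_nhds hlt),
      self_mem_nhdsWithin] with t htU ht1 ht
    exact ⟨⟨⟨(entryParam_nonneg.trans entryParam_le_exitParam).trans ht.out.le, ht1.out.le⟩,
      htU⟩, ht⟩
  obtain ⟨t, ht, hlt⟩ := hin.exists
  exact (le_csSup bddAbove_segParams ht).not_gt hlt

lemma clip_fst_eq_iff (hU : IsOpen U) {a : E} (ha : a ∈ U) : (clip U e).1 = a ↔ e.1 = a := by
  constructor
  · intro h
    have h0 := entryParam_eq_zero_of_mem hU (h ▸ ha)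
    simpa [clip, h0] using h
  · rintro rfl
    simp [clip, entryParam_eq_zero ha]

lemma clip_snd_eq_iff (hU : IsOpen U) {a : E} (ha : a ∈ U) : (clip U e).2 = a ↔ e.2 = a := by
  constructor
  · intro h
    have h1 := exitParam_eq_one_of_mem hU (h ▸ ha)
    simpa [clip, h1] using h
  · rintro rfl
    simp [clip, exitParam_eq_one ha]

/-- An endpoint in `U` pins one parameter to `0` or `1`; if the other coincided with it, the
other clipped endpoint would also lie in `U` and be pinned to the opposite end. -/
lemma entryParam_lt_exitParam (hU : IsOpen U) (he : e.1 ∈ U ∨ e.2 ∈ U) :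
    entryParam U e < exitParam U e := by
  refine entryParam_le_exitParam.lt_of_ne fun heq => ?_
  rcases he with h | h
  · have h0 := entryParam_eq_zero h
    have h1 : exitParam U e = 1 := exitParam_eq_one_of_mem hU (by simpa [clip, ← heq, h0])
    linarith
  · have h1 := exitParam_eq_one h
    have h0 : entryParam U e = 0 := entryParam_eq_zero_of_mem hU (by simpa [clip, heq, h1])
    linarith

lemma clip_fst_ne_snd (hU : IsOpen U) (he : e.1 ∈ U ∨ e.2 ∈ U) (hne : e.1 ≠ e.2) :
    (clip U e).1 ≠ (clip U e).2 :=
  (AffineMap.lineMap_injective ℝ hne).ne (entryParam_lt_exitParam hU he).ne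

lemma norm_clip_sub :
    ‖(clip U e).2 - (clip U e).1‖ = (exitParam U e - entryParam U e) * ‖e.2 - e.1‖ := by
  rw [← dist_eq_norm, ← dist_eq_norm, dist_comm e.2, clip, dist_lineMap_lineMap, Real.dist_eq,
    abs_of_nonneg (sub_nonneg.2 entryParam_le_exitParam)]

end Clip

section Flux

variable {X ι : Type*} [DecidableEq X]

def incidence (x : X × X) (a : X) : ℤ :=
  (if x.1 = a then 1 else 0) - (if x.2 = a then 1 else 0)

def flux (S : Finset ι) (c : ι → X × X) (w : ι → ℤ) (a : X) : ℤ :=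
  ∑ i ∈ S, w i * incidence (c i) a

lemma incidence_swap (x : X × X) (a : X) : incidence x.swap a = -incidence x a := by
  simp only [incidence, Prod.fst_swap, Prod.snd_swap]
  ring

lemma flux_id_eq_sub (S : Finset (X × X)) (d : X × X → ℕ) (a : X) :
    flux S id (fun x => (d x : ℤ)) a =
      ∑ x ∈ S with x.1 = a, (d x : ℤ) - ∑ x ∈ S with x.2 = a, (d x : ℤ) := by
  simp [flux, incidence, mul_sub, Finset.sum_sub_distrib, Finset.sum_filter]

lemma flux_sub (S : Finset ι) (c : ι → X × X) (w w' : ι → ℤ) (a : X) :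
    flux S c (fun i => w i - w' i) a = flux S c w a - flux S c w' a := by
  simp only [flux, sub_mul, Finset.sum_sub_distrib]

lemma flux_comp_swap {T : Finset (X × X)} (hT : T.image Prod.swap = T) (f : X × X → ℤ)
    (a : X) : flux T id (fun x => f x.swap) a = -flux T id f a := by
  conv_rhs => rw [← hT, flux, Finset.sum_image Prod.swap_injective.injOn]
  simp [flux, incidence_swap]

lemma flux_eq_of_subset {S T : Finset (X × X)} (hST : S ⊆ T) {f : X × X → ℤ}
    (hf : ∀ x ∈ T, x ∉ S → f x = 0) (a : X) : flux T id f a = flux S id f a :=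
  (Finset.sum_subset hST fun x hxT hxS => by simp [hf x hxT hxS]).symm

def pushWeight (S : Finset ι) (c : ι → X × X) (w : ι → ℕ) (x : X × X) : ℕ :=
  ∑ i ∈ S with c i = x, w i

lemma flux_eq_flux_image (S : Finset ι) (c : ι → X × X) (w : ι → ℕ) (a : X) :
    flux S c (fun i => (w i : ℤ)) a =
      flux (S.image c) id (fun x => (pushWeight S c w x : ℤ)) a := by
  rw [flux, ← Finset.sum_fiberwise_of_maps_to fun i hi => Finset.mem_image_of_mem c hi]
  refine Finset.sum_congr rfl fun x _ => ?_
  simp only [id, pushWeight, Nat.cast_sum, Finset.sum_mul]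
  exact Finset.sum_congr rfl fun i hi => by rw [(Finset.mem_filter.1 hi).2]

lemma mem_image_of_pushWeight_ne_zero {S : Finset ι} {c : ι → X × X} {w : ι → ℕ}
    {x : X × X} (h : pushWeight S c w x ≠ 0) : x ∈ S.image c := by
  obtain ⟨i, hi, -⟩ := Finset.exists_ne_zero_of_sum_ne_zero h
  obtain ⟨hiS, rfl⟩ := Finset.mem_filter.1 hi
  exact Finset.mem_image_of_mem c hiS

end Flux

theorem rpow_sum_le_sum_rpow {ι : Type*} {α : ℝ} (hα0 : 0 < α) (hα1 : α ≤ 1) (s : Finset ι)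
    {f : ι → ℝ} (hf : ∀ i ∈ s, 0 ≤ f i) : (∑ i ∈ s, f i) ^ α ≤ ∑ i ∈ s, f i ^ α :=
  Finset.le_sum_of_subadditive_on_pred (· ^ α) (0 ≤ ·) (by simp [Real.zero_rpow hα0.ne'])
    (fun _ _ hx hy => Real.rpow_add_le_add_rpow hx hy hα0.le hα1) (fun _ _ => add_nonneg) f hf

def BrGraph.net {m : ℕ} {ι : Type*} (A : Finset (Pt m)) (S : Finset ι)
    (c : ι → Pt m × Pt m) (w : ι → ℕ) : BrGraph m where
  V := A ∪ S.image (fun i => (c i).1) ∪ S.image (fun i => (c i).2)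
  E := (S.image c).filter fun x => pushWeight S c w x.swap < pushWeight S c w x
  d x := pushWeight S c w x - pushWeight S c w x.swap

namespace BrGraph

variable {m : ℕ} {ι : Type*} {A : Finset (Pt m)} {S : Finset ι} {c : ι → Pt m × Pt m}
  {w : ι → ℕ} {x : Pt m × Pt m}

lemma mem_net_E : x ∈ (net A S c w).E ↔ pushWeight S c w x.swap < pushWeight S c w x := by
  simp only [net, Finset.mem_filter, and_iff_right_iff_imp]
  exact fun h => mem_image_of_pushWeight_ne_zero (Nat.ne_zero_of_lt h)

lemma mem_image_of_mem_net_E (hx : x ∈ (net A S c w).E) : x ∈ S.image c :=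
  (Finset.mem_filter.1 hx).1

lemma net_d_pos (hx : x ∈ (net A S c w).E) : 1 ≤ (net A S c w).d x := by
  have := mem_net_E.1 hx
  simp only [net]
  omega

lemma swap_notMem_net_E (hx : x ∈ (net A S c w).E) : x.swap ∉ (net A S c w).E := by
  rw [mem_net_E, Prod.swap_swap, not_lt]
  exact (mem_net_E.1 hx).le

/-- With `g` the positive part of `D - D ∘ swap`, one has `g - g ∘ swap = D - D ∘ swap`, and on
a swap-closed support the two sides have twice the flux of `g` resp. `D`. -/
lemma flux_net (a : Pt m) :
    flux (net A S c w).E id (fun x => ((net A S c w).d x : ℤ)) a =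
      flux S c (fun i => w i) a := by
  set D : Pt m × Pt m → ℤ := fun x => pushWeight S c w x
  set g : Pt m × Pt m → ℤ := fun x => max (D x - D x.swap) 0
  set T := S.image c ∪ (S.image c).image Prod.swap
  have hT : T.image Prod.swap = T := by
    simp [T, Finset.image_union, Finset.image_image, Function.comp_def, Finset.union_comm]
  have hET : (net A S c w).E ⊆ T := (Finset.filter_subset _ _).trans Finset.subset_union_left
  have hgE : flux T id g a = flux (net A S c w).E id (fun x => ((net A S c w).d x : ℤ)) a := by
    rw [flux_eq_of_subset hET fun x _ hx => ?_]
    · refine Finset.sum_congr rfl fun x hx => ?_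
      have := mem_net_E.1 hx
      simp only [g, D, net, id]
      congr 1
      omega
    · have := mem_net_E.not.1 hx
      simp only [g, D]
      omega
  have hDS : flux T id D a = flux S c (fun i => w i) a := by
    rw [flux_eq_flux_image S c w, flux_eq_of_subset Finset.subset_union_left fun x _ hx =>
      by simpa [D] using mt mem_image_of_pushWeight_ne_zero hx]
  have hgD : flux T id (fun x => g x - g x.swap) a = flux T id (fun x => D x - D x.swap) a := by
    refine Finset.sum_congr rfl fun x _ => ?_
    simp only [g, Prod.swap_swap]
    congr 1
    omega
  rw [flux_sub, flux_sub, flux_comp_swap hT, flux_comp_swap hT] at hgD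
  linarith

lemma cost_net_le {α : ℝ} (hα0 : 0 < α) (hα1 : α ≤ 1) :
    (net A S c w).cost α ≤ ∑ i ∈ S, (w i : ℝ) ^ α * ‖(c i).2 - (c i).1‖ := by
  calc (net A S c w).cost α
      ≤ ∑ x ∈ (net A S c w).E, (pushWeight S c w x : ℝ) ^ α * ‖x.2 - x.1‖ := by
        refine Finset.sum_le_sum fun x _ => ?_
        gcongr
        exact_mod_cast Nat.sub_le _ _
    _ ≤ ∑ x ∈ S.image c, (pushWeight S c w x : ℝ) ^ α * ‖x.2 - x.1‖ :=
        Finset.sum_le_sum_of_subset_of_nonneg (Finset.filter_subset _ _)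
          fun _ _ _ => by positivity
    _ ≤ ∑ x ∈ S.image c, ∑ i ∈ S with c i = x, (w i : ℝ) ^ α * ‖x.2 - x.1‖ := by
        refine Finset.sum_le_sum fun x _ => ?_
        rw [← Finset.sum_mul, pushWeight, Nat.cast_sum]
        gcongr
        exact rpow_sum_le_sum_rpow hα0 hα1 _ fun _ _ => Nat.cast_nonneg _
    _ = ∑ i ∈ S, (w i : ℝ) ^ α * ‖(c i).2 - (c i).1‖ := by
        rw [← Finset.sum_fiberwise_of_maps_to fun i hi => Finset.mem_image_of_mem c hi]
        refine Finset.sum_congr rfl fun x _ => Finset.sum_congr rfl fun i hi => ?_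
        rw [(Finset.mem_filter.1 hi).2]

end BrGraph

lemma sum_exitParam_sub_entryParam_le_one {E ι : Type*} [NormedAddCommGroup E]
    [NormedSpace ℝ E] [Fintype ι] {U : ι → Set E} (hconv : ∀ p, Convex ℝ (U p))
    (hdisj : Pairwise fun p q => Disjoint (U p) (U q)) (e : E × E) :
    ∑ p, (exitParam (U p) e - entryParam (U p) e) ≤ 1 := by
  simpa using sum_sub_le_of_pairwiseDisjoint_Ioo zero_le_one
    (fun p _ => entryParam_le_exitParam) (fun p _ => ⟨entryParam_nonneg, exitParam_le_one⟩)
    fun p _ q _ hpq => (((hdisj hpq).preimage _).mono Set.inter_subset_right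
      Set.inter_subset_right).mono (Ioo_entryParam_exitParam_subset (hconv p))
      (Ioo_entryParam_exitParam_subset (hconv q))

lemma Lbrbd_le_ofReal_cost {m : ℕ} {α : ℝ} {A : Finset (Pt m)} {U : Set (Pt m)}
    {G : BrGraph m} (hG : G.IsConn A U) : Lbrbd m α A U ≤ ENNReal.ofReal (G.cost α) :=
  iInf₂_le G hG

namespace BrGraph

variable {m : ℕ}

def restrict (G : BrGraph m) (U : Set (Pt m)) (A : Finset (Pt m)) : BrGraph m :=
  net A (G.E.filter fun e => e.1 ∈ U ∨ e.2 ∈ U) (clip U) G.d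

/-- Edges missing `U` contribute `0`, since `sInf ∅ = sSup ∅ = 0` in `ℝ`. -/
def costIn (α : ℝ) (G : BrGraph m) (U : Set (Pt m)) : ℝ :=
  ∑ e ∈ G.E, (G.d e : ℝ) ^ α * ((exitParam U e - entryParam U e) * ‖e.2 - e.1‖)

variable {G : BrGraph m} {U Ω : Set (Pt m)} {A P Q : Finset (Pt m)}

lemma costIn_nonneg (α : ℝ) : 0 ≤ G.costIn α U :=
  Finset.sum_nonneg fun _ _ =>
    mul_nonneg (by positivity) (mul_nonneg (sub_nonneg.2 entryParam_le_exitParam) (norm_nonneg _))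

lemma sum_costIn_le_cost {ι : Type*} [Fintype ι] {U : ι → Set (Pt m)}
    (hconv : ∀ p, Convex ℝ (U p)) (hdisj : Pairwise fun p q => Disjoint (U p) (U q)) (α : ℝ) :
    ∑ p, G.costIn α (U p) ≤ G.cost α := by
  simp only [costIn]
  rw [Finset.sum_comm]
  refine Finset.sum_le_sum fun e _ => ?_
  calc ∑ p, (G.d e : ℝ) ^ α * ((exitParam (U p) e - entryParam (U p) e) * ‖e.2 - e.1‖)
      = (G.d e : ℝ) ^ α * ‖e.2 - e.1‖ * ∑ p, (exitParam (U p) e - entryParam (U p) e) := by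
        rw [Finset.mul_sum]
        exact Finset.sum_congr rfl fun _ _ => by ring
    _ ≤ (G.d e : ℝ) ^ α * ‖e.2 - e.1‖ * 1 := by
        gcongr
        exact sum_exitParam_sub_entryParam_le_one hconv hdisj e
    _ = (G.d e : ℝ) ^ α * ‖e.2 - e.1‖ := mul_one _

lemma cost_restrict_le {α : ℝ} (hα0 : 0 < α) (hα1 : α ≤ 1) :
    (G.restrict U A).cost α ≤ G.costIn α U := by
  refine (cost_net_le hα0 hα1).trans ?_
  simp only [norm_clip_sub]
  exact Finset.sum_le_sum_of_subset_of_nonneg (Finset.filter_subset _ _) fun _ _ _ =>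
    mul_nonneg (by positivity) (mul_nonneg (sub_nonneg.2 entryParam_le_exitParam) (norm_nonneg _))

lemma flux_restrict (hU : IsOpen U) {a : Pt m} (ha : a ∈ U) :
    flux (G.restrict U A).E id (fun x => ((G.restrict U A).d x : ℤ)) a =
      flux G.E id (fun e => (G.d e : ℤ)) a := by
  rw [restrict, flux_net, flux, flux, Finset.sum_filter]
  refine Finset.sum_congr rfl fun e _ => ?_
  split_ifs with he
  · simp [incidence, clip_fst_eq_iff hU ha, clip_snd_eq_iff hU ha]
  · have h1 : e.1 ≠ a := fun h => he (Or.inl (h ▸ ha))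
    have h2 : e.2 ≠ a := fun h => he (Or.inr (h ▸ ha))
    simp [incidence, h1, h2]

lemma restrict_V_subset_closure (hA : (A : Set (Pt m)) ⊆ U) :
    ((G.restrict U A).V : Set (Pt m)) ⊆ closure U := by
  intro a ha
  simp only [restrict, net, Finset.coe_union, Finset.coe_image, Finset.coe_filter,
    Set.mem_union, Set.mem_image] at ha
  rcases ha with (ha | ⟨e, ⟨-, he⟩, rfl⟩) | ⟨e, ⟨-, he⟩, rfl⟩
  · exact subset_closure (hA ha)
  · exact (clip_mem_closure he).1
  · exact (clip_mem_closure he).2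

lemma mem_V_of_mem_restrict_V (hU : IsOpen U) (hGV : ∀ e ∈ G.E, e.1 ∈ G.V ∧ e.2 ∈ G.V)
    (hAV : A ⊆ G.V) {a : Pt m} (haU : a ∈ U) (ha : a ∈ (G.restrict U A).V) : a ∈ G.V := by
  simp only [restrict, net, Finset.mem_union, Finset.mem_image, Finset.mem_filter] at ha
  rcases ha with (ha | ⟨e, ⟨he, -⟩, hea⟩) | ⟨e, ⟨he, -⟩, hea⟩
  · exact hAV ha
  · exact (clip_fst_eq_iff hU haU).1 hea ▸ (hGV e he).1
  · exact (clip_snd_eq_iff hU haU).1 hea ▸ (hGV e he).2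

theorem isConn_restrict (hU : IsOpen U) (hΩ : IsOpen Ω) (hUΩ : U ⊆ Ω)
    (hG : G.IsConnPQ P Q Ω) (hQU : Disjoint (Q : Set (Pt m)) U)
    (hA : (A : Set (Pt m)) = (P : Set (Pt m)) ∩ U) : (G.restrict U A).IsConn A U := by
  obtain ⟨hPV, -, -, hGE, -, -, hbal⟩ := hG
  have hAU : (A : Set (Pt m)) ⊆ U := hA ▸ Set.inter_subset_right
  refine ⟨Finset.subset_union_left.trans Finset.subset_union_left,
    restrict_V_subset_closure hAU, fun x hx => ?_, fun x hx => swap_notMem_net_E hx,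
    fun x hx => net_d_pos hx, fun a haV hafr => ?_⟩
  · obtain ⟨e, he, rfl⟩ := Finset.mem_image.1 (mem_image_of_mem_net_E hx)
    obtain ⟨heE, heU⟩ := Finset.mem_filter.1 he
    refine ⟨?_, ?_, clip_fst_ne_snd hU heU (hGE e heE).2.2⟩
    · exact Finset.mem_union_left _ (Finset.mem_union_right _ (Finset.mem_image_of_mem _ he))
    · exact Finset.mem_union_right _ (Finset.mem_image_of_mem _ he)
  · have haU : a ∈ U := by
      by_contra h
      exact hafr ⟨restrict_V_subset_closure hAU haV, by rwa [hU.interior_eq]⟩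
    have hGa := hbal a (mem_V_of_mem_restrict_V hU (fun e he => ⟨(hGE e he).1, (hGE e he).2.1⟩)
      ((Finset.coe_subset.1 (hA ▸ Set.inter_subset_left)).trans hPV) haU haV)
      (by rw [hΩ.frontier_eq]; exact fun h => h.2 (hUΩ haU))
    have hflux := flux_restrict (G := G) (A := A) hU haU
    rw [flux_id_eq_sub, flux_id_eq_sub, hGa] at hflux
    have haQ : a ∉ Q := fun h => Set.disjoint_left.1 hQU h haU
    have haA : a ∈ A ↔ a ∈ P := by
      rw [← Finset.mem_coe, hA]
      exact ⟨fun h => h.1, fun h => ⟨h, haU⟩⟩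
    rw [← Nat.cast_inj (R := ℤ)]
    push_cast
    simp only [haA, haQ, if_false] at hflux ⊢
    split_ifs at hflux ⊢ <;> omega

end BrGraph

theorem statement16_general (m : ℕ) (α : ℝ) (hα0 : 0 < α) (hα1 : α ≤ 1)
    (Ω : Set (Pt m)) (hΩo : IsOpen Ω)
    (P Q : Finset (Pt m))
    (ι : Type) [Fintype ι] (Ωp : ι → Set (Pt m))
    (hsub : ∀ p, Ωp p ⊆ Ω) (hopen : ∀ p, IsOpen (Ωp p)) (hconv : ∀ p, Convex ℝ (Ωp p))
    (hdisj : ∀ p q, p ≠ q → Disjoint (Ωp p) (Ωp q))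
    (hQcl : ∀ p, (Q : Set (Pt m)) ∩ closure (Ωp p) = ∅)
    (Pp : ι → Finset (Pt m)) (hPp : ∀ p, (Pp p : Set (Pt m)) = (P : Set (Pt m)) ∩ Ωp p) :
    ∑ p, Lbrbd m α (Pp p) (Ωp p) ≤ LbrbdPQ m α P Q Ω := by
  refine le_iInf₂ fun G hG => ?_
  have hQ : ∀ p, Disjoint (Q : Set (Pt m)) (Ωp p) := fun p =>
    (Set.disjoint_iff_inter_eq_empty.2 (hQcl p)).mono_right subset_closure
  calc ∑ p, Lbrbd m α (Pp p) (Ωp p)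
      ≤ ∑ p, ENNReal.ofReal (G.costIn α (Ωp p)) := Finset.sum_le_sum fun p _ =>
        (Lbrbd_le_ofReal_cost (G.isConn_restrict (hopen p) hΩo (hsub p) hG (hQ p) (hPp p))).trans
          (ENNReal.ofReal_le_ofReal (G.cost_restrict_le hα0 hα1))
    _ = ENNReal.ofReal (∑ p, G.costIn α (Ωp p)) :=
        (ENNReal.ofReal_sum_of_nonneg fun p _ => G.costIn_nonneg α).symm
    _ ≤ ENNReal.ofReal (G.cost α) :=
        ENNReal.ofReal_le_ofReal (G.sum_costIn_le_cost hconv (fun p q => hdisj p q) α)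

/-- If `(Ω_p)` is a finite family of pairwise disjoint open convex subsets of an open set
`Ω ⊆ ℝ^m`, and `P, Q ⊆ Ω` are disjoint finite sets with `Q ∩ cl Ω_p = ∅` and
`P ∩ ∂Ω_p = ∅` for every `p`, then
`ℒ^α_brbd(P, Q, Ω) ≥ Σ_p ℒ^α_brbd(P ∩ Ω_p, ∂Ω_p)`. -/
theorem statement16 (m : ℕ) (α : ℝ) (hα0 : 0 < α) (hα1 : α ≤ 1)
    (Ω : Set (Pt m)) (hΩo : IsOpen Ω)
    (P Q : Finset (Pt m)) (hP : (P : Set (Pt m)) ⊆ Ω) (hQ : (Q : Set (Pt m)) ⊆ Ω)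
    (hPQ : Disjoint P Q)
    (ι : Type) [Fintype ι] (Ωp : ι → Set (Pt m))
    (hsub : ∀ p, Ωp p ⊆ Ω) (hopen : ∀ p, IsOpen (Ωp p)) (hconv : ∀ p, Convex ℝ (Ωp p))
    (hdisj : ∀ p q, p ≠ q → Disjoint (Ωp p) (Ωp q))
    (hQcl : ∀ p, (Q : Set (Pt m)) ∩ closure (Ωp p) = ∅)
    (hPfr : ∀ p, (P : Set (Pt m)) ∩ frontier (Ωp p) = ∅)
    (Pp : ι → Finset (Pt m)) (hPp : ∀ p, (Pp p : Set (Pt m)) = (P : Set (Pt m)) ∩ Ωp p) :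
    ∑ p, Lbrbd m α (Pp p) (Ωp p) ≤ LbrbdPQ m α P Q Ω :=
  statement16_general m α hα0 hα1 Ω hΩo P Q ι Ωp hsub hopen hconv hdisj hQcl Pp hPp

end
end
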